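/- arXiv:2201.11865 — 2 statements merged into one kernel-verified Lean document; each statement's English description precedes it below -/
import Mathlib

section
/- Let W, F be finite-dimensional real inner product spaces, let u : W → F be differentiable at w_c ∈ W with ‖Du(w_c)‖_op ≤ Λ₃, and let h : F → ℝ be twice continuously differentiable. Set z := u(w_c) and fix z̃ ∈ F, λ ∈ ℝ, C ≥ 0 such that for every point v on the segment [z, z̃] the operator norm of (Hess h(v) − λ·id) is at most C. Define the corrected client gradient g̃ := (Du(w_c))* (∇h(z̃) + λ·(z − z̃)), where (Du(w_c))* is the adjoint of the Fréchet derivative of u at w_c. Then the true gradient of h ∘ u at w_c equals (Du(w_c))* ∇h(z), and ‖g̃ − ∇(h ∘ u)(w_c)‖ ≤ C·Λ₃·‖z̃ − z‖. -/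
/-! By the chain rule `∇(h ∘ u)(w_c) = Du* ∇h(z)`, so the error of the corrected gradient is
`Du*` applied to `∇h(z̃) − ∇h(z) − λ(z̃ − z)`. The latter is the increment of `∇h − λ·id`, whose
derivative `Hess h − λ·id` has norm at most `C` on `[z, z̃]`; the mean value inequality bounds it
by `C‖z̃ − z‖`, and `‖Du*‖ = ‖Du‖ ≤ Λ₃`. -/

open ContinuousLinearMap InnerProductSpace

section

variable {𝕜 E F : Type*} [RCLike 𝕜]
  [NormedAddCommGroup E] [InnerProductSpace 𝕜 E] [CompleteSpace E]
  [NormedAddCommGroup F] [InnerProductSpace 𝕜 F] [CompleteSpace F]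

theorem HasGradientAt.comp_hasFDerivAt {h : F → 𝕜} {g : F} {u : E → F} {Du : E →L[𝕜] F}
    {x : E} (hh : HasGradientAt h g (u x)) (hu : HasFDerivAt u Du x) :
    HasGradientAt (h ∘ u) (adjoint Du g) x := by
  rw [hasGradientAt_iff_hasFDerivAt]
  refine (hh.hasFDerivAt.comp x hu).congr_fderiv ?_
  ext w
  simp [toDual_apply_apply, adjoint_inner_left]

theorem norm_adjoint_apply_le (A : E →L[𝕜] F) (y : F) : ‖adjoint A y‖ ≤ ‖A‖ * ‖y‖ :=
  adjoint.norm_map A ▸ (adjoint A).le_opNorm y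

end

theorem ContDiff.differentiable_gradient {F : Type*} [NormedAddCommGroup F]
    [InnerProductSpace ℝ F] [CompleteSpace F] {h : F → ℝ} {n : WithTop ℕ∞}
    (hh : ContDiff ℝ n h) (hn : 2 ≤ n) : Differentiable ℝ (gradient h) :=
  (toDual ℝ F).symm.toContinuousLinearEquiv.differentiable.comp
    ((hh.fderiv_right (m := 1) (by rwa [one_add_one_eq_two])).differentiable one_ne_zero)

theorem corrected_client_gradient_error_bound_general
    {W F : Type*}
    [NormedAddCommGroup W] [InnerProductSpace ℝ W] [FiniteDimensional ℝ W]
    [NormedAddCommGroup F] [InnerProductSpace ℝ F] [FiniteDimensional ℝ F]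
    (u : W → F) (wc : W) (Du : W →L[ℝ] F) (hu : HasFDerivAt u Du wc)
    (Λ₃ : ℝ) (hΛ₃ : ‖Du‖ ≤ Λ₃)
    (h : F → ℝ) (hh : ContDiff ℝ 2 h)
    (z : F) (hz : z = u wc) (ztil : F) (lam C : ℝ)
    (hHess : ∀ v ∈ segment ℝ z ztil,
      ‖fderiv ℝ (gradient h) v - lam • ContinuousLinearMap.id ℝ F‖ ≤ C)
    (gtil : W)
    (hgtil : gtil =
      ContinuousLinearMap.adjoint Du (gradient h ztil + lam • (z - ztil))) :
    gradient (h ∘ u) wc = ContinuousLinearMap.adjoint Du (gradient h z)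
      ∧ ‖gtil - gradient (h ∘ u) wc‖ ≤ C * Λ₃ * ‖ztil - z‖ := by
  subst hz
  have hgrad : gradient (h ∘ u) wc = adjoint Du (gradient h (u wc)) :=
    ((hh.differentiable two_ne_zero (u wc)).hasGradientAt.comp_hasFDerivAt hu).gradient
  refine ⟨hgrad, ?_⟩
  have hmvt : ‖gradient h ztil - gradient h (u wc) - lam • (ztil - u wc)‖ ≤ C * ‖ztil - u wc‖ :=
    (convex_segment _ _).norm_image_sub_le_of_norm_fderiv_le'
      (fun v _ ↦ hh.differentiable_gradient le_rfl v) hHess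
      (left_mem_segment ℝ _ _) (right_mem_segment ℝ _ _)
  have hdiff : gtil - gradient (h ∘ u) wc =
      adjoint Du (gradient h ztil - gradient h (u wc) - lam • (ztil - u wc)) := by
    rw [hgtil, hgrad, ← map_sub]
    congr 1
    module
  calc ‖gtil - gradient (h ∘ u) wc‖
      ≤ ‖Du‖ * ‖gradient h ztil - gradient h (u wc) - lam • (ztil - u wc)‖ :=
        hdiff ▸ norm_adjoint_apply_le Du _
    _ ≤ Λ₃ * (C * ‖ztil - u wc‖) :=
        mul_le_mul hΛ₃ hmvt (norm_nonneg _) ((norm_nonneg Du).trans hΛ₃)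
    _ = C * Λ₃ * ‖ztil - u wc‖ := by ring

/-- Client-side version of bound (thm1_4) in the proof of Theorem 1: with
`z = u(w_c)`, the true gradient of `h ∘ u` at `w_c` is `(Du(w_c))* ∇h(z)`, and the
corrected client gradient `g̃ = (Du(w_c))* (∇h(z̃) + λ(z − z̃))` satisfies
`‖g̃ − ∇(h ∘ u)(w_c)‖ ≤ C · Λ₃ · ‖z̃ − z‖`, where `C` bounds `‖Hess h − λ·id‖`
along the segment `[z, z̃]` and `Λ₃` bounds `‖Du(w_c)‖`. -/
theorem corrected_client_gradient_error_bound
    {W F : Type*}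
    [NormedAddCommGroup W] [InnerProductSpace ℝ W] [FiniteDimensional ℝ W]
    [NormedAddCommGroup F] [InnerProductSpace ℝ F] [FiniteDimensional ℝ F]
    (u : W → F) (wc : W) (Du : W →L[ℝ] F) (hu : HasFDerivAt u Du wc)
    (Λ₃ : ℝ) (hΛ₃ : ‖Du‖ ≤ Λ₃)
    (h : F → ℝ) (hh : ContDiff ℝ 2 h)
    (z : F) (hz : z = u wc) (ztil : F) (lam C : ℝ) (hC : 0 ≤ C)
    (hHess : ∀ v ∈ segment ℝ z ztil,
      ‖fderiv ℝ (gradient h) v - lam • ContinuousLinearMap.id ℝ F‖ ≤ C)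
    (gtil : W)
    (hgtil : gtil =
      ContinuousLinearMap.adjoint Du (gradient h ztil + lam • (z - ztil))) :
    gradient (h ∘ u) wc = ContinuousLinearMap.adjoint Du (gradient h z)
      ∧ ‖gtil - gradient (h ∘ u) wc‖ ≤ C * Λ₃ * ‖ztil - z‖ :=
  corrected_client_gradient_error_bound_general u wc Du hu Λ₃ hΛ₃ h hh z hz ztil lam C hHess gtil
    hgtil
end

section
/- Let W_c, W_s, Z be finite-dimensional real inner product spaces, let u : W_c → Z be differentiable at w_c with ‖Du(w_c)‖_op ≤ Λ₃, and let h : W_s × Z → ℝ be twice continuously differentiable. Fix w_s ∈ W_s, set z := u(w_c), and let z̃ ∈ Z satisfy ‖z − z̃‖ ≤ κ. Suppose that for every v on the segment [z, z̃]: (i) the operator norm of the mixed second derivative ∂²h/∂ζ∂w_s at (w_s, v) is at most Λ₁; and (ii) the operator norm of (∂²h/∂ζ²(w_s, v) − λ·id) is at most |Λ₂ − λ|. Define the server-side perturbation δ_s := ∇_{w_s} h(w_s, z̃) − ∇_{w_s} h(w_s, z) and the client-side perturbation δ_c := (Du(w_c))*(∇_ζ h(w_s, z̃) + λ(z − z̃))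 − (Du(w_c))* ∇_ζ h(w_s, z). Then ‖δ_c‖² + ‖δ_s‖² ≤ (Λ₁² + (Λ₂ − λ)²·Λ₃²)·κ². -/
/-!
Both perturbations are increments of `C¹` maps along the segment `[z, z̃]`: `δ_s` that of
`ζ ↦ ∇_{w_s} h(w_s, ζ)`, and `δ_c` the image under `Du*` of the increment of
`ζ ↦ ∇_ζ h(w_s, ζ) - λ ζ`. The mean value inequality bounds them by `Λ₁ κ` and
`‖Du*‖ |Λ₂ - λ| κ`, and `‖Du*‖ = ‖Du‖ ≤ Λ₃`.
-/

open ContinuousLinearMap InnerProductSpace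

protected theorem ContDiff.gradient {E F : Type*} [NormedAddCommGroup E] [NormedSpace ℝ E]
    [NormedAddCommGroup F] [InnerProductSpace ℝ F] [CompleteSpace F]
    {f : E → F → ℝ} {g : E → F} {m n : WithTop ℕ∞}
    (hf : ContDiff ℝ n (Function.uncurry f)) (hg : ContDiff ℝ m g) (hmn : m + 1 ≤ n) :
    ContDiff ℝ m fun x => gradient (f x) (g x) :=
  (toDual ℝ F).symm.toContinuousLinearEquiv.contDiff.comp (hf.fderiv hg hmn)

theorem norm_adjoint_add_smul_sub_le_of_norm_fderiv_sub_smul_id_le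
    {E F : Type*} [NormedAddCommGroup E] [InnerProductSpace ℝ E] [CompleteSpace E]
    [NormedAddCommGroup F] [InnerProductSpace ℝ F] [CompleteSpace F]
    (A : E →L[ℝ] F) {g : F → F} {x y : F} {lam C : ℝ}
    (hg : ∀ v ∈ segment ℝ x y, DifferentiableAt ℝ g v)
    (hbound : ∀ v ∈ segment ℝ x y, ‖fderiv ℝ g v - lam • ContinuousLinearMap.id ℝ F‖ ≤ C) :
    ‖adjoint A (g y + lam • (x - y)) - adjoint A (g x)‖ ≤ ‖A‖ * (C * ‖y - x‖) := by
  have hincr : g y + lam • (x - y) - g x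
      = g y - g x - (lam • ContinuousLinearMap.id ℝ F) (y - x) := by
    simp only [smul_apply, id_apply, smul_sub]
    abel
  rw [← map_sub, hincr, ← adjoint.norm_map A]
  exact (le_opNorm _ _).trans <| by
    gcongr
    exact (convex_segment x y).norm_image_sub_le_of_norm_fderiv_le' hg hbound
      (left_mem_segment ℝ x y) (right_mem_segment ℝ x y)

theorem fedlite_combined_perturbation_bound_general
    {Wc Ws Z : Type*}
    [NormedAddCommGroup Wc] [InnerProductSpace ℝ Wc] [FiniteDimensional ℝ Wc]
    [NormedAddCommGroup Ws] [InnerProductSpace ℝ Ws] [FiniteDimensional ℝ Ws]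
    [NormedAddCommGroup Z] [InnerProductSpace ℝ Z] [FiniteDimensional ℝ Z]
    (Du : Wc →L[ℝ] Z)
    (Λ₃ : ℝ) (hΛ₃ : ‖Du‖ ≤ Λ₃)
    (h : Ws × Z → ℝ) (hh : ContDiff ℝ 2 h)
    (ws : Ws) (z : Z) (ztil : Z) (κ : ℝ) (hκ : ‖z - ztil‖ ≤ κ)
    (Λ₁ Λ₂ lam : ℝ)
    (hmixed : ∀ v ∈ segment ℝ z ztil,
      ‖fderiv ℝ (fun ζ => gradient (fun w' => h (w', ζ)) ws) v‖ ≤ Λ₁)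
    (hHess : ∀ v ∈ segment ℝ z ztil,
      ‖fderiv ℝ (gradient (fun ζ => h (ws, ζ))) v
          - lam • ContinuousLinearMap.id ℝ Z‖ ≤ |Λ₂ - lam|)
    (δs : Ws)
    (hδs : δs = gradient (fun w' => h (w', ztil)) ws
                  - gradient (fun w' => h (w', z)) ws)
    (δc : Wc)
    (hδc : δc =
      ContinuousLinearMap.adjoint Du
          (gradient (fun ζ => h (ws, ζ)) ztil + lam • (z - ztil))
        - ContinuousLinearMap.adjoint Du (gradient (fun ζ => h (ws, ζ)) z)) :
    ‖δc‖ ^ 2 + ‖δs‖ ^ 2 ≤ (Λ₁ ^ 2 + (Λ₂ - lam) ^ 2 * Λ₃ ^ 2) * κ ^ 2 := by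
  have hG : Differentiable ℝ fun ζ => gradient (fun w' => h (w', ζ)) ws :=
    ((hh.comp (contDiff_snd.prodMk contDiff_fst)).gradient contDiff_const
      (by norm_num)).differentiable one_ne_zero
  have hg : Differentiable ℝ (gradient fun ζ => h (ws, ζ)) :=
    ((hh.comp (contDiff_const.prodMk contDiff_snd)).gradient (f := fun _ ζ => h (ws, ζ))
      contDiff_id (by norm_num)).differentiable one_ne_zero
  have hκ' : ‖ztil - z‖ ≤ κ := norm_sub_rev z ztil ▸ hκ
  have hΛ₁ : 0 ≤ Λ₁ := (norm_nonneg _).trans (hmixed z (left_mem_segment ℝ z ztil))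
  have hδs_le : ‖δs‖ ≤ Λ₁ * κ := by
    rw [hδs]
    refine ((convex_segment z ztil).norm_image_sub_le_of_norm_fderiv_le (fun v _ => hG v)
      hmixed (left_mem_segment ℝ z ztil) (right_mem_segment ℝ z ztil)).trans ?_
    gcongr
  have hδc_le : ‖δc‖ ≤ Λ₃ * (|Λ₂ - lam| * κ) := by
    rw [hδc]
    refine (norm_adjoint_add_smul_sub_le_of_norm_fderiv_sub_smul_id_le Du
      (fun v _ => hg v) hHess).trans ?_
    gcongr
    exact (norm_nonneg _).trans hΛ₃
  calc ‖δc‖ ^ 2 + ‖δs‖ ^ 2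
      ≤ (Λ₃ * (|Λ₂ - lam| * κ)) ^ 2 + (Λ₁ * κ) ^ 2 := by gcongr
    _ = (Λ₁ ^ 2 + (Λ₂ - lam) ^ 2 * Λ₃ ^ 2) * κ ^ 2 := by
      simp only [mul_pow, sq_abs]
      ring

/-- Combined perturbation bound in Theorem 1: with true activation `z = u(w_c)` and
quantized activation `z̃` at distance at most `κ`, if along the segment `[z, z̃]` the
mixed second derivative `∂²h/∂ζ∂w_s` has operator norm at most `Λ₁` and
`∂²h/∂ζ² − λ·id` has operator norm at most `|Λ₂ − λ|`, then the server-side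
perturbation `δ_s` and the (λ-corrected) client-side perturbation `δ_c` satisfy
`‖δ_c‖² + ‖δ_s‖² ≤ (Λ₁² + (Λ₂ − λ)²Λ₃²)κ²`. -/
theorem fedlite_combined_perturbation_bound
    {Wc Ws Z : Type*}
    [NormedAddCommGroup Wc] [InnerProductSpace ℝ Wc] [FiniteDimensional ℝ Wc]
    [NormedAddCommGroup Ws] [InnerProductSpace ℝ Ws] [FiniteDimensional ℝ Ws]
    [NormedAddCommGroup Z] [InnerProductSpace ℝ Z] [FiniteDimensional ℝ Z]
    (u : Wc → Z) (wc : Wc) (Du : Wc →L[ℝ] Z) (hu : HasFDerivAt u Du wc)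
    (Λ₃ : ℝ) (hΛ₃ : ‖Du‖ ≤ Λ₃)
    (h : Ws × Z → ℝ) (hh : ContDiff ℝ 2 h)
    (ws : Ws) (z : Z) (hz : z = u wc) (ztil : Z) (κ : ℝ) (hκ : ‖z - ztil‖ ≤ κ)
    (Λ₁ Λ₂ lam : ℝ)
    (hmixed : ∀ v ∈ segment ℝ z ztil,
      ‖fderiv ℝ (fun ζ => gradient (fun w' => h (w', ζ)) ws) v‖ ≤ Λ₁)
    (hHess : ∀ v ∈ segment ℝ z ztil,
      ‖fderiv ℝ (gradient (fun ζ => h (ws, ζ))) v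
          - lam • ContinuousLinearMap.id ℝ Z‖ ≤ |Λ₂ - lam|)
    (δs : Ws)
    (hδs : δs = gradient (fun w' => h (w', ztil)) ws
                  - gradient (fun w' => h (w', z)) ws)
    (δc : Wc)
    (hδc : δc =
      ContinuousLinearMap.adjoint Du
          (gradient (fun ζ => h (ws, ζ)) ztil + lam • (z - ztil))
        - ContinuousLinearMap.adjoint Du (gradient (fun ζ => h (ws, ζ)) z)) :
    ‖δc‖ ^ 2 + ‖δs‖ ^ 2 ≤ (Λ₁ ^ 2 + (Λ₂ - lam) ^ 2 * Λ₃ ^ 2) * κ ^ 2 :=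
  fedlite_combined_perturbation_bound_general Du Λ₃ hΛ₃ h hh ws z ztil κ hκ Λ₁ Λ₂ lam hmixed hHess
    δs hδs δc hδc
end
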